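/- arXiv:2411.05598 — 2 statements merged into one kernel-verified Lean document; each statement's English description precedes it below -/
import Mathlib

section
/- If a concrete shift (R, S, φ_R, φ_S, ψ_A, ψ_B) between essential ℕ-matrices A and B with lag m is compatible, i.e., φ_R^{(m)} = (id_R × ψ_B)(ψ_A^{-1} × id_R) and φ_S^{(m)} = (id_S × ψ_A)(ψ_B^{-1} × id_S), then it is aligned, i.e., (ψ_A × id_A)(id_R × φ_S)(φ_R × id_S) = (id_A × ψ_A) and (ψ_B × id_B)(id_S × φ_R)(φ_S × id_R) = (id_B × ψ_B). -/
/-! Edges of `ℕ`-matrices, fibered products of edge sets, paths, path isomorphisms,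
concrete shifts, iterated path isomorphisms `φ^{(m)}`, and the aligned / balanced /
compatible conditions, following Carlsen–Dor-On–Eilers. -/

/-- The edge set `E_F = {(v, α, w) : 0 ≤ α < F_{v w}}` of a matrix `F` over `ℕ`. -/
def Edge {α β : Type} (F : Matrix α β ℕ) : Type :=
  {x : α × ℕ × β // x.2.1 < F x.1 x.2.2}

/-- Source of an edge. -/
def Edge.src {α β : Type} {F : Matrix α β ℕ} (e : Edge F) : α := e.1.1

/-- Range (target) of an edge. -/
def Edge.tgt {α β : Type} {F : Matrix α β ℕ} (e : Edge F) : β := e.1.2.2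

/-- Fibered product of two edge-like sets: composable pairs. -/
def FP {γ : Type} (X Y : Type) (t : X → γ) (s : Y → γ) : Type :=
  {p : X × Y // t p.1 = s p.2}

/-- Paths of length `m` in the graph of a square matrix `X`: composable `m`-tuples of edges. -/
def EPath {α : Type} (X : Matrix α α ℕ) (m : ℕ) : Type :=
  {p : Fin m → Edge X //
    ∀ (i : ℕ) (h : i + 1 < m), (p ⟨i + 1, h⟩).src = (p ⟨i, Nat.lt_of_succ_lt h⟩).tgt}

/-- Source of a (nonempty) path. -/
def EPath.src {α : Type} {X : Matrix α α ℕ} {m : ℕ} (p : EPath X m) (h : 0 < m) : α :=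
  ((p.1 ⟨0, h⟩)).src

/-- Range of a (nonempty) path. -/
def EPath.tgt {α : Type} {X : Matrix α α ℕ} {m : ℕ} (p : EPath X m) (h : 0 < m) : α :=
  ((p.1 ⟨m - 1, Nat.sub_lt h Nat.one_pos⟩)).tgt

/-- A matrix is essential if it has no zero rows and no zero columns. -/
def MatEssential {V : Type} (A : Matrix V V ℕ) : Prop :=
  (∀ v, ∃ w, A v w ≠ 0) ∧ (∀ w, ∃ v, A v w ≠ 0)

/-- A concrete shift between `A` and `B` with lag `m`: matrices `R`, `S` over `ℕ` together
with path isomorphisms (source- and range-preserving bijections)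
`φR : E_A × E_R → E_R × E_B`, `φS : E_B × E_S → E_S × E_A`,
`ψA : E_R × E_S → E_A^m`, `ψB : E_S × E_R → E_B^m`. -/
structure ConcreteShift {V W : Type} (A : Matrix V V ℕ) (B : Matrix W W ℕ) (m : ℕ) where
  hm : 0 < m
  R : Matrix V W ℕ
  S : Matrix W V ℕ
  φR : FP (Edge A) (Edge R) Edge.tgt Edge.src ≃ FP (Edge R) (Edge B) Edge.tgt Edge.src
  φS : FP (Edge B) (Edge S) Edge.tgt Edge.src ≃ FP (Edge S) (Edge A) Edge.tgt Edge.src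
  ψA : FP (Edge R) (Edge S) Edge.tgt Edge.src ≃ EPath A m
  ψB : FP (Edge S) (Edge R) Edge.tgt Edge.src ≃ EPath B m
  φR_src : ∀ p, ((φR p).1.1).src = (p.1.1).src
  φR_tgt : ∀ p, ((φR p).1.2).tgt = (p.1.2).tgt
  φS_src : ∀ p, ((φS p).1.1).src = (p.1.1).src
  φS_tgt : ∀ p, ((φS p).1.2).tgt = (p.1.2).tgt
  ψA_src : ∀ p, (ψA p).src hm = (p.1.1).src
  ψA_tgt : ∀ p, (ψA p).tgt hm = (p.1.2).tgt
  ψB_src : ∀ p, (ψB p).src hm = (p.1.1).src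
  ψB_tgt : ∀ p, (ψB p).tgt hm = (p.1.2).tgt

/-- The defining relation of the iterated path isomorphism
`φ^{(m)} = (φ × id)(id × φ × id) ⋯ (id × φ) : E_X^m × E_M → E_M × E_Y^m`:
`IterRel φ m as r r' bs` holds iff `φ^{(m)}(as, r) = (r', bs)`, i.e. iff there is a chain
`ρ_m = r`, `ρ_0 = r'` with `φ(as_i, ρ_{i+1}) = (ρ_i, bs_i)` for all `i`. -/
def IterRel {α β : Type} {X : Matrix α α ℕ} {Y : Matrix β β ℕ} {M : Matrix α β ℕ}
    (φ : FP (Edge X) (Edge M) Edge.tgt Edge.src ≃ FP (Edge M) (Edge Y) Edge.tgt Edge.src)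
    (m : ℕ) (as : EPath X m) (r r' : Edge M) (bs : EPath Y m) : Prop :=
  ∃ ρ : Fin (m + 1) → Edge M, ρ (Fin.last m) = r ∧ ρ 0 = r' ∧
    ∀ i : Fin m, ∃ h : (as.1 i).tgt = (ρ i.succ).src,
      (φ ⟨(as.1 i, ρ i.succ), h⟩).1 = (ρ i.castSucc, bs.1 i)

variable {V W : Type} {A : Matrix V V ℕ} {B : Matrix W W ℕ} {m : ℕ}

/-- A concrete shift is aligned if
`(ψ_A × id_A)(id_R × φ_S)(φ_R × id_S) = (id_A × ψ_A)` and
`(ψ_B × id_B)(id_S × φ_R)(φ_S × id_R) = (id_B × ψ_B)`,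
under the canonical identifications `E_A^m × E_A ≅ E_A^{m+1} ≅ E_A × E_A^m`. -/
def ConcreteShift.Aligned (cs : ConcreteShift A B m) : Prop :=
  (∀ (a : Edge A) (r : Edge cs.R) (s : Edge cs.S)
      (h1 : a.tgt = r.src) (h2 : r.tgt = s.src)
      (r' : Edge cs.R) (b : Edge B) (_ : (cs.φR ⟨(a, r), h1⟩).1 = (r', b))
      (h3 : b.tgt = s.src)
      (s' : Edge cs.S) (a' : Edge A) (_ : (cs.φS ⟨(b, s), h3⟩).1 = (s', a'))
      (h4 : r'.tgt = s'.src),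
      (Fin.snoc (cs.ψA ⟨(r', s'), h4⟩).1 a' : Fin (m + 1) → Edge A) = (Fin.cons a (cs.ψA ⟨(r, s), h2⟩).1 : Fin (m + 1) → Edge A)) ∧
  (∀ (b : Edge B) (s : Edge cs.S) (r : Edge cs.R)
      (h1 : b.tgt = s.src) (h2 : s.tgt = r.src)
      (s' : Edge cs.S) (a' : Edge A) (_ : (cs.φS ⟨(b, s), h1⟩).1 = (s', a'))
      (h3 : a'.tgt = r.src)
      (r' : Edge cs.R) (b' : Edge B) (_ : (cs.φR ⟨(a', r), h3⟩).1 = (r', b'))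
      (h4 : s'.tgt = r'.src),
      (Fin.snoc (cs.ψB ⟨(s', r'), h4⟩).1 b' : Fin (m + 1) → Edge B) = (Fin.cons b (cs.ψB ⟨(s, r), h2⟩).1 : Fin (m + 1) → Edge B))

/-- A concrete shift is balanced if
`ψ_A⁻¹ × ψ_A = (id_R × φ_S^{(m)})(φ_R^{(m)} × id_S)` and
`ψ_B⁻¹ × ψ_B = (id_S × φ_R^{(m)})(φ_S^{(m)} × id_R)`. -/
def ConcreteShift.Balanced (cs : ConcreteShift A B m) : Prop :=
  (∀ (as : EPath A m) (r : Edge cs.R) (s : Edge cs.S)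
      (_ : as.tgt cs.hm = r.src) (h2 : r.tgt = s.src)
      (r₀ : Edge cs.R) (bs : EPath B m) (_ : IterRel cs.φR m as r r₀ bs)
      (s₀ : Edge cs.S) (as' : EPath A m) (_ : IterRel cs.φS m bs s s₀ as')
      (k : r₀.tgt = s₀.src),
      cs.ψA ⟨(r₀, s₀), k⟩ = as ∧ cs.ψA ⟨(r, s), h2⟩ = as') ∧
  (∀ (bs : EPath B m) (s : Edge cs.S) (r : Edge cs.R)
      (_ : bs.tgt cs.hm = s.src) (h2 : s.tgt = r.src)
      (s₀ : Edge cs.S) (as : EPath A m) (_ : IterRel cs.φS m bs s s₀ as)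
      (r₀ : Edge cs.R) (bs' : EPath B m) (_ : IterRel cs.φR m as r r₀ bs')
      (k : s₀.tgt = r₀.src),
      cs.ψB ⟨(s₀, r₀), k⟩ = bs ∧ cs.ψB ⟨(s, r), h2⟩ = bs')

/-- A concrete shift is compatible if
`φ_R^{(m)} = (id_R × ψ_B)(ψ_A⁻¹ × id_R)` and `φ_S^{(m)} = (id_S × ψ_A)(ψ_B⁻¹ × id_S)`. -/
def ConcreteShift.Compatible (cs : ConcreteShift A B m) : Prop :=
  (∀ (as : EPath A m) (r r' : Edge cs.R) (bs : EPath B m)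
      (_ : IterRel cs.φR m as r r' bs)
      (r₁ : Edge cs.R) (s₁ : Edge cs.S) (k : r₁.tgt = s₁.src)
      (_ : cs.ψA ⟨(r₁, s₁), k⟩ = as) (k2 : s₁.tgt = r.src),
      r' = r₁ ∧ bs = cs.ψB ⟨(s₁, r), k2⟩) ∧
  (∀ (bs : EPath B m) (s s' : Edge cs.S) (as : EPath A m)
      (_ : IterRel cs.φS m bs s s' as)
      (s₁ : Edge cs.S) (r₁ : Edge cs.R) (k : s₁.tgt = r₁.src)
      (_ : cs.ψB ⟨(s₁, r₁), k⟩ = bs) (k2 : r₁.tgt = s.src),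
      s' = s₁ ∧ as = cs.ψA ⟨(r₁, s), k2⟩)

/-! Compatibility says that `φ_R^{(m)}(ψ_A(r₁, s₁), r) = (r₁, ψ_B(s₁, r))`, and symmetrically
for `φ_S`. Reading off the last step of these iterations shows that the edge `a'` in
`φ_S(φ_R(a, r)₂, s) = (s', a')` is the last edge of `ψ_A(r, s)`. For the first `m` edges,
iterate `φ_R` along the path `a · ψ_A(r, s)` of length `m + 1`: both of its windows of length `m`
lie in the image of `ψ_A`, so by compatibility both windows of the resulting `B`-path lie in the
image of `ψ_B`, and the first step of the iteration is `φ_R(a, r) = (r', b)`. Iterating `φ_S`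
along that `B`-path in the same way identifies `s'`, and together
`ψ_A(r', s') = init (a · ψ_A(r, s))`. -/

namespace EPath

variable {α : Type} {X : Matrix α α ℕ}

def tail {n : ℕ} (p : EPath X (n + 1)) : EPath X n :=
  ⟨Fin.tail p.1, fun i _ => p.2 (i + 1) (by omega)⟩

def init {n : ℕ} (p : EPath X (n + 1)) : EPath X n :=
  ⟨Fin.init p.1, fun i _ => p.2 i (by omega)⟩

def cons {n : ℕ} (a : Edge X) (p : EPath X n) (h : ∀ hn : 0 < n, a.tgt = (p.1 ⟨0, hn⟩).src) :
    EPath X (n + 1) :=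
  ⟨Fin.cons a p.1, fun i hi => match i with
    | 0 => (h (by omega)).symm
    | i + 1 => p.2 i (by omega)⟩

theorem exists_src_eq (hX : MatEssential X) (n : ℕ) (v : α) :
    ∃ p : EPath X (n + 1), (p.1 0).src = v := by
  induction n generalizing v with
  | zero =>
    obtain ⟨w, hw⟩ := hX.1 v
    exact ⟨⟨fun _ => ⟨(v, 0, w), Nat.pos_of_ne_zero hw⟩, fun i h => by omega⟩, rfl⟩
  | succ n ih =>
    obtain ⟨w, hw⟩ := hX.1 v
    obtain ⟨p, hp⟩ := ih w
    exact ⟨cons ⟨(v, 0, w), Nat.pos_of_ne_zero hw⟩ p fun _ => hp.symm, rfl⟩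

theorem exists_last_eq (hX : MatEssential X) (n : ℕ) (e : Edge X) :
    ∃ p : EPath X (n + 1), p.1 (Fin.last n) = e := by
  induction n with
  | zero => exact ⟨⟨fun _ => e, fun i h => by omega⟩, rfl⟩
  | succ n ih =>
    obtain ⟨p, hp⟩ := ih
    obtain ⟨u, hu⟩ := hX.2 (p.1 0).src
    exact ⟨cons ⟨(u, 0, (p.1 0).src), Nat.pos_of_ne_zero hu⟩ p fun _ => rfl, hp⟩

end EPath

section IterRel

variable {α β : Type} {X : Matrix α α ℕ} {Y : Matrix β β ℕ} {M : Matrix α β ℕ}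
  {φ : FP (Edge X) (Edge M) Edge.tgt Edge.src ≃ FP (Edge M) (Edge Y) Edge.tgt Edge.src}

theorem iterRel_zero_iff {as : EPath X 0} {r r' : Edge M} {bs : EPath Y 0} :
    IterRel φ 0 as r r' bs ↔ r' = r :=
  ⟨fun ⟨_, hlast, h0, _⟩ => h0.symm.trans hlast,
    fun h => ⟨fun _ => r, rfl, h.symm, fun i => i.elim0⟩⟩

theorem iterRel_succ_iff {n : ℕ} {as : EPath X (n + 1)} {r r' : Edge M} {bs : EPath Y (n + 1)} :
    IterRel φ (n + 1) as r r' bs ↔ ∃ (ρ : Edge M) (h : (as.1 0).tgt = ρ.src),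
      IterRel φ n as.tail r ρ bs.tail ∧ (φ ⟨(as.1 0, ρ), h⟩).1 = (r', bs.1 0) := by
  constructor
  · rintro ⟨ρ, hlast, h0, hstep⟩
    obtain ⟨h, hφ⟩ := hstep 0
    refine ⟨ρ 1, h, ⟨fun i => ρ i.succ, hlast, rfl, fun i => hstep i.succ⟩, ?_⟩
    rwa [Fin.castSucc_zero, h0] at hφ
  · rintro ⟨ρ₁, h, ⟨ρ, hlast, h0, hstep⟩, hφ⟩
    refine ⟨Fin.cons r' ρ, hlast, rfl, Fin.cases ?_ hstep⟩
    subst h0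
    exact ⟨h, hφ⟩

theorem IterRel.exists_last {n : ℕ} {as : EPath X (n + 1)} {r r' : Edge M} {bs : EPath Y (n + 1)}
    (hI : IterRel φ (n + 1) as r r' bs) :
    ∃ (ρ : Edge M) (h : (as.1 (Fin.last n)).tgt = r.src),
      (φ ⟨(as.1 (Fin.last n), r), h⟩).1 = (ρ, bs.1 (Fin.last n)) ∧
        IterRel φ n as.init ρ r' bs.init := by
  obtain ⟨ρ, rfl, rfl, hstep⟩ := hI
  obtain ⟨h, hφ⟩ := hstep (Fin.last n)
  exact ⟨_, h, hφ, fun i => ρ i.castSucc, rfl, congrArg ρ Fin.castSucc_zero,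
    fun i => hstep i.castSucc⟩

theorem exists_iterRel (hs : ∀ p, ((φ p).1.1).src = (p.1.1).src)
    (ht : ∀ p, ((φ p).1.2).tgt = (p.1.2).tgt) {n : ℕ} (as : EPath X n) (r : Edge M)
    (h : ∀ hn : 0 < n, as.tgt hn = r.src) : ∃ r' bs, IterRel φ n as r r' bs := by
  induction n with
  | zero => exact ⟨r, ⟨Fin.elim0, fun i h => by omega⟩, iterRel_zero_iff.2 rfl⟩
  | succ n ih =>
    have htail : ∀ hn : 0 < n, as.tail.tgt hn = r.src := fun hn =>
      (congrArg (fun i => (as.1 i).tgt)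
        (Fin.ext (by simp; omega) : (⟨n - 1, by omega⟩ : Fin n).succ = Fin.last n)).trans
        (h n.succ_pos)
    obtain ⟨ρ, bs, hI⟩ := ih as.tail htail
    have hρ : (as.1 0).tgt = ρ.src ∧ ∀ hn : 0 < n, ρ.tgt = (bs.1 ⟨0, hn⟩).src := by
      cases n with
      | zero => exact ⟨(iterRel_zero_iff.1 hI) ▸ h Nat.one_pos, fun hn => absurd hn (lt_irrefl 0)⟩
      | succ k =>
        obtain ⟨ρ₁, h₁, -, hφ⟩ := iterRel_succ_iff.1 hI
        have hsrc := hs ⟨(as.tail.1 0, ρ₁), h₁⟩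
        have hcomp := (φ ⟨(as.tail.1 0, ρ₁), h₁⟩).2
        rw [hφ] at hsrc hcomp
        exact ⟨(as.2 0 (by omega)).symm.trans hsrc.symm, fun _ => hcomp⟩
    let x := φ ⟨(as.1 0, ρ), hρ.1⟩
    exact ⟨x.1.1, bs.cons x.1.2 fun hn => (ht _).trans (hρ.2 hn),
      iterRel_succ_iff.2 ⟨ρ, hρ.1, hI, rfl⟩⟩

end IterRel

namespace ConcreteShift

def swap (cs : ConcreteShift A B m) : ConcreteShift B A m where
  hm := cs.hm
  R := cs.S
  S := cs.R
  φR := cs.φS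
  φS := cs.φR
  ψA := cs.ψB
  ψB := cs.ψA
  φR_src := cs.φS_src
  φR_tgt := cs.φS_tgt
  φS_src := cs.φR_src
  φS_tgt := cs.φR_tgt
  ψA_src := cs.ψB_src
  ψA_tgt := cs.ψB_tgt
  ψB_src := cs.ψA_src
  ψB_tgt := cs.ψA_tgt

theorem Compatible.swap {cs : ConcreteShift A B m} (hc : cs.Compatible) : cs.swap.Compatible :=
  ⟨hc.2, hc.1⟩

section

variable {n : ℕ} (cs : ConcreteShift A B (n + 1))

theorem exists_R_edge_src_eq (hA : MatEssential A) (v : V) : ∃ e : Edge cs.R, e.src = v := by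
  obtain ⟨p, hp⟩ := EPath.exists_src_eq hA n v
  refine ⟨(cs.ψA.symm p).1.1, ?_⟩
  rw [← cs.ψA_src, cs.ψA.apply_symm_apply]
  exact hp

theorem φR_snd_eq_ψB_last (hc : cs.Compatible) (y : FP (Edge cs.R) (Edge cs.S) Edge.tgt Edge.src)
    {a : Edge A} (ha : (cs.ψA y).1 (Fin.last n) = a) {r : Edge cs.R} (h : a.tgt = r.src)
    (hr : y.1.2.tgt = r.src) :
    (cs.φR ⟨(a, r), h⟩).1.2 = (cs.ψB ⟨(y.1.2, r), hr⟩).1 (Fin.last n) := by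
  subst ha
  obtain ⟨r₀, bs, hI⟩ := exists_iterRel cs.φR_src cs.φR_tgt (cs.ψA y) r fun _ => h
  obtain ⟨-, rfl⟩ := hc.1 _ r r₀ bs hI y.1.1 y.1.2 y.2 rfl hr
  obtain ⟨ρ, _, hφ, -⟩ := hI.exists_last
  rw [hφ]

theorem eq_ψA_last (hA : MatEssential A) (hc : cs.Compatible)
    {a : Edge A} {r : Edge cs.R} {s : Edge cs.S} (h1 : a.tgt = r.src) (h2 : r.tgt = s.src)
    {r' : Edge cs.R} {b : Edge B} (hφR : (cs.φR ⟨(a, r), h1⟩).1 = (r', b)) (h3 : b.tgt = s.src)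
    {s' : Edge cs.S} {a' : Edge A} (hφS : (cs.φS ⟨(b, s), h3⟩).1 = (s', a')) :
    a' = (cs.ψA ⟨(r, s), h2⟩).1 (Fin.last n) := by
  obtain ⟨q, hq⟩ := EPath.exists_last_eq hA n a
  let y := cs.ψA.symm q
  have hy : (cs.ψA y).1 (Fin.last n) = a := by rw [cs.ψA.apply_symm_apply, hq]
  have hr : y.1.2.tgt = r.src := by
    rw [← cs.ψA_tgt y]
    exact (congrArg Edge.tgt hy).trans h1
  have hb : (cs.ψB ⟨(y.1.2, r), hr⟩).1 (Fin.last n) = b :=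
    (cs.φR_snd_eq_ψB_last hc y hy h1 hr).symm.trans (congrArg Prod.snd hφR)
  exact (congrArg Prod.snd hφS).symm.trans
    (cs.swap.φR_snd_eq_ψB_last hc.swap ⟨(y.1.2, r), hr⟩ hb h3 h2)

theorem exists_ψB_windows (hc : cs.Compatible) (q : EPath A (n + 2))
    (x y : FP (Edge cs.R) (Edge cs.S) Edge.tgt Edge.src) (hx : cs.ψA x = q.tail)
    (hy : cs.ψA y = q.init) (ρ : Edge cs.R) (hρ : x.1.2.tgt = ρ.src) :
    ∃ (bq : EPath B (n + 2)) (ρ' : Edge cs.R) (hρ' : y.1.2.tgt = ρ'.src),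
      cs.ψB ⟨(x.1.2, ρ), hρ⟩ = bq.tail ∧ cs.ψB ⟨(y.1.2, ρ'), hρ'⟩ = bq.init ∧
        ∀ h, (cs.φR ⟨(q.1 0, x.1.1), h⟩).1 = (y.1.1, bq.1 0) := by
  have hq : ∀ hn, q.tgt hn = ρ.src := fun _ => by
    rw [← hρ, ← cs.ψA_tgt x, hx]
    rfl
  obtain ⟨r₀, bq, hI⟩ := exists_iterRel cs.φR_src cs.φR_tgt q ρ hq
  obtain ⟨ρ₁, _, hItail, hhead⟩ := iterRel_succ_iff.1 hI
  obtain ⟨rfl, hbtail⟩ := hc.1 _ ρ ρ₁ _ hItail x.1.1 x.1.2 x.2 hx hρ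
  obtain ⟨ρ', hl, hlast, hIinit⟩ := hI.exists_last
  have hρ' : y.1.2.tgt = ρ'.src := by
    have hsrc := cs.φR_src ⟨(q.1 (Fin.last (n + 1)), ρ), hl⟩
    rw [hlast] at hsrc
    rw [← cs.ψA_tgt y, hy, hsrc]
    exact (q.2 n (by omega)).symm
  obtain ⟨rfl, hbinit⟩ := hc.1 _ ρ' r₀ _ hIinit y.1.1 y.1.2 y.2 hy hρ'
  exact ⟨bq, ρ', hρ', hbtail.symm, hbinit.symm, fun _ => hhead⟩

theorem ψA_eq_init_cons (hA : MatEssential A) (hB : MatEssential B) (hc : cs.Compatible)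
    {a : Edge A} {r : Edge cs.R} {s : Edge cs.S} (h1 : a.tgt = r.src) (h2 : r.tgt = s.src)
    {r' : Edge cs.R} {b : Edge B} (hφR : (cs.φR ⟨(a, r), h1⟩).1 = (r', b)) (h3 : b.tgt = s.src)
    {s' : Edge cs.S} {a' : Edge A} (hφS : (cs.φS ⟨(b, s), h3⟩).1 = (s', a'))
    (h4 : r'.tgt = s'.src) :
    cs.ψA ⟨(r', s'), h4⟩ =
      (EPath.cons a (cs.ψA ⟨(r, s), h2⟩) fun _ => h1.trans (cs.ψA_src ⟨(r, s), h2⟩).symm).init := by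
  set q := EPath.cons a (cs.ψA ⟨(r, s), h2⟩) fun _ => h1.trans (cs.ψA_src ⟨(r, s), h2⟩).symm
  let y := cs.ψA.symm q.init
  obtain ⟨ρ, hρ⟩ := cs.exists_R_edge_src_eq hA s.tgt
  obtain ⟨bq, ρ', hρ', hbtail, hbinit, hφR'⟩ :=
    cs.exists_ψB_windows hc q ⟨(r, s), h2⟩ y rfl (cs.ψA.apply_symm_apply _) ρ hρ.symm
  obtain ⟨rfl, rfl⟩ := Prod.mk.inj ((hφR' h1).symm.trans hφR)
  obtain ⟨σ, hσ⟩ := cs.swap.exists_R_edge_src_eq hB ρ.tgt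
  obtain ⟨_, _, _, -, -, hφS'⟩ := cs.swap.exists_ψB_windows hc.swap bq ⟨(s, ρ), hρ.symm⟩
    ⟨(y.1.2, ρ'), hρ'⟩ hbtail hbinit σ hσ.symm
  obtain ⟨rfl, -⟩ := Prod.mk.inj ((hφS' h3).symm.trans hφS)
  exact cs.ψA.apply_symm_apply _

end

theorem snoc_ψA_eq_cons_ψA (hA : MatEssential A) (hB : MatEssential B) (cs : ConcreteShift A B m)
    (hc : cs.Compatible) {a : Edge A} {r : Edge cs.R} {s : Edge cs.S} (h1 : a.tgt = r.src)
    (h2 : r.tgt = s.src) {r' : Edge cs.R} {b : Edge B} (hφR : (cs.φR ⟨(a, r), h1⟩).1 = (r', b))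
    (h3 : b.tgt = s.src) {s' : Edge cs.S} {a' : Edge A} (hφS : (cs.φS ⟨(b, s), h3⟩).1 = (s', a'))
    (h4 : r'.tgt = s'.src) :
    (Fin.snoc (cs.ψA ⟨(r', s'), h4⟩).1 a' : Fin (m + 1) → Edge A) =
      Fin.cons a (cs.ψA ⟨(r, s), h2⟩).1 := by
  obtain ⟨n, rfl⟩ := Nat.exists_eq_add_one_of_ne_zero cs.hm.ne'
  rw [cs.ψA_eq_init_cons hA hB hc h1 h2 hφR h3 hφS h4, cs.eq_ψA_last hA hc h1 h2 hφR h3 hφS]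
  exact Fin.snoc_init_self (α := fun _ => Edge A) (Fin.cons a (cs.ψA ⟨(r, s), h2⟩).1)

end ConcreteShift

/-- for essential matrices, a compatible concrete shift is aligned. -/
theorem stmt4 {V W : Type} {A : Matrix V V ℕ} {B : Matrix W W ℕ} {m : ℕ}
    (hA : MatEssential A) (hB : MatEssential B) (cs : ConcreteShift A B m)
    (h : cs.Compatible) : cs.Aligned :=
  ⟨fun _ _ _ h1 h2 _ _ hφR h3 _ _ hφS h4 => cs.snoc_ψA_eq_cons_ψA hA hB h h1 h2 hφR h3 hφS h4,
    fun _ _ _ h1 h2 _ _ hφS h3 _ _ hφR h4 =>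
      cs.swap.snoc_ψA_eq_cons_ψA hB hA h.swap h1 h2 hφS h3 hφR h4⟩
end

section
/- Let Z_1 be an A-B C*-correspondence and Z_2 a B-C C*-correspondence. Then for any closed ideal I ⊴ C, (Z_1 ⊗_B Z_2)^{-1}(I) = Z_1^{-1}(Z_2^{-1}(I)). -/
/-! Basic framework: C*-correspondences over (possibly non-unital) C*-algebras,
interior tensor products (characterized by their universal properties),
closed ideals, and unitary isomorphisms of correspondences. -/

noncomputable section

/-- A (non-degenerate) A–B C*-correspondence: a right Hilbert `B`-module `X`
together with a left action of `A` by adjointable operators. -/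
structure Corr (A B : Type) [NonUnitalCStarAlgebra A] [NonUnitalCStarAlgebra B] : Type 1 where
  X : Type
  [grp : NormedAddCommGroup X]
  [nsc : NormedSpace ℂ X]
  [cpl : CompleteSpace X]
  /-- the right action of `B` -/
  sm : X → B → X
  /-- the `B`-valued inner product (linear in the second variable) -/
  ip : X → X → B
  /-- the left action of `A` -/
  φ : A → X → X
  sm_add : ∀ x y b, sm (x + y) b = sm x b + sm y b
  sm_add' : ∀ x b c, sm x (b + c) = sm x b + sm x c
  sm_mul : ∀ x b c, sm (sm x b) c = sm x (b * c)
  sm_smul : ∀ (t : ℂ) x b, sm (t • x) b = t • sm x b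
  sm_smul' : ∀ (t : ℂ) x b, sm x (t • b) = t • sm x b
  ip_add : ∀ x y z, ip x (y + z) = ip x y + ip x z
  ip_smul : ∀ (t : ℂ) x y, ip x (t • y) = t • ip x y
  ip_sm : ∀ x y b, ip x (sm y b) = ip x y * b
  ip_star : ∀ x y, star (ip x y) = ip y x
  ip_pos : ∀ x, ∃ b, ip x x = star b * b
  ip_norm : ∀ x, ‖x‖ ^ 2 = ‖ip x x‖
  φ_add : ∀ a x y, φ a (x + y) = φ a x + φ a y
  φ_add' : ∀ a b x, φ (a + b) x = φ a x + φ b x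
  φ_smul : ∀ a (t : ℂ) x, φ a (t • x) = t • φ a x
  φ_smul' : ∀ (t : ℂ) a x, φ (t • a) x = t • φ a x
  φ_mul : ∀ a b x, φ (a * b) x = φ a (φ b x)
  φ_adj : ∀ a x y, ip (φ a x) y = ip x (φ (star a) y)
  /-- non-degeneracy of the left action -/
  nondeg : closure (Submodule.span ℂ {z | ∃ a x, z = φ a x} : Set X) = Set.univ

attribute [instance] Corr.grp Corr.nsc Corr.cpl

variable {A B C : Type} [NonUnitalCStarAlgebra A] [NonUnitalCStarAlgebra B]
  [NonUnitalCStarAlgebra C]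

/-- `Z.setR I` is the closed submodule `Z·I` of `Z`. -/
def Corr.setR (Z : Corr A B) (I : Set B) : Set Z.X :=
  closure (Submodule.span ℂ {x | ∃ ξ b, b ∈ I ∧ x = Z.sm ξ b} : Set Z.X)

/-- `Z.setL I` is the closed subspace `I·Z` of `Z`. -/
def Corr.setL (Z : Corr A B) (I : Set A) : Set Z.X :=
  closure (Submodule.span ℂ {x | ∃ a ξ, a ∈ I ∧ x = Z.φ a ξ} : Set Z.X)

/-- `Z⁻¹(I) = {a ∈ A : φ_Z(a)Z ⊆ ZI}`. -/
def Corr.inv (Z : Corr A B) (I : Set B) : Set A := {a | ∀ ξ, Z.φ a ξ ∈ Z.setR I}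

/-- The closed ideal of `B` generated by the inner products of `Z`. -/
def Corr.ipSet (Z : Corr A B) : Set B :=
  closure (Submodule.span ℂ {b | ∃ x y, b = Z.ip x y} : Set B)

/-- A generalized compact operator on the underlying Hilbert module of a correspondence:
one that is approximable in operator norm by finite sums of "rank one" operators
`θ_{ξ,η} : z ↦ ξ·⟨η,z⟩`. -/
def Corr.IsCompactOp (Z : Corr A B) (f : Z.X → Z.X) : Prop :=
  ∀ ε > (0 : ℝ), ∃ (n : ℕ) (ξ η : Fin n → Z.X),
    ∀ z, ‖f z - ∑ i, Z.sm (ξ i) (Z.ip (η i) z)‖ ≤ ε * ‖z‖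

/-- A closed (two-sided, automatically self-adjoint) ideal of a C*-algebra, as a set. -/
structure IsCIdeal {B : Type} [NonUnitalCStarAlgebra B] (I : Set B) : Prop where
  isClosed : IsClosed I
  zero_mem : (0 : B) ∈ I
  add_mem : ∀ x y, x ∈ I → y ∈ I → x + y ∈ I
  smul_mem : ∀ (t : ℂ) x, x ∈ I → t • x ∈ I
  mul_left_mem : ∀ b x, x ∈ I → b * x ∈ I
  mul_right_mem : ∀ b x, x ∈ I → x * b ∈ I

/-- `t : Z₁ × Z₂ → T` exhibits `T` as the interior tensor product `Z₁ ⊗_B Z₂`. -/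
structure IsTensor (Z₁ : Corr A B) (Z₂ : Corr B C) (T : Corr A C)
    (t : Z₁.X → Z₂.X → T.X) : Prop where
  add_left : ∀ x x' y, t (x + x') y = t x y + t x' y
  add_right : ∀ x y y', t x (y + y') = t x y + t x y'
  smul_left : ∀ (c : ℂ) x y, t (c • x) y = c • t x y
  balanced : ∀ x b y, t (Z₁.sm x b) y = t x (Z₂.φ b y)
  sm_right : ∀ x y c, t x (Z₂.sm y c) = T.sm (t x y) c
  act_left : ∀ a x y, T.φ a (t x y) = t (Z₁.φ a x) y
  inner : ∀ x x' y y', T.ip (t x y) (t x' y') = Z₂.ip y (Z₂.φ (Z₁.ip x x') y')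
  dense : closure (Submodule.span ℂ {z | ∃ x y, z = t x y} : Set T.X) = Set.univ

/-- `X ≅ Z₁ ⊗ Z₂` (unitary isomorphism with the interior tensor product). -/
def IsTensorProd (Z₁ : Corr A B) (Z₂ : Corr B C) (T : Corr A C) : Prop :=
  ∃ t, IsTensor Z₁ Z₂ T t

/-- A unitary isomorphism of A–B correspondences. -/
def CorrIso (Z W : Corr A B) : Prop :=
  ∃ u : Z.X → W.X, Function.Surjective u ∧ (∀ x y, u (x + y) = u x + u y) ∧
    (∀ (c : ℂ) x, u (c • x) = c • u x) ∧ (∀ a x, u (Z.φ a x) = W.φ a (u x)) ∧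
    (∀ x b, u (Z.sm x b) = W.sm (u x) b) ∧ (∀ x y, W.ip (u x) (u y) = Z.ip x y)

end

/-!
An element `a` lies in `Z⁻¹(I)` iff `⟪u, φ(a) z⟫ ∈ I` for all `u, z`. One implication holds because
`Z·I` is the closed span of the `ξ·b` with `b ∈ I`. For the other, `⟪z, z⟫ ∈ I` forces `z ∈ Z·I`:
with `b = ⟪z, z⟫` and `d = b (b + ε)⁻¹ ∈ I`, one has `‖z - z·d‖² = ‖(1 - d) b (1 - d)‖ ≤ ε`.

By this description and `⟪x ⊗ y, x' ⊗ y'⟫ = ⟪y, φ(⟪x, x'⟫) y'⟫`, both inclusions come down to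
`⟪ζ, φ(a)(x ⊗ y)⟫ ∈ I`, and elementary tensors are dense. Besides Cauchy–Schwarz, the one analytic
input is continuity of `a ↦ φ(a) y`, which makes `Z₂⁻¹(I)` closed; it holds because the positive
map `a ↦ ⟪y, φ(a) y⟫` is automatically bounded.
-/

open MulOpposite

-- Mathlib provides the order on a C⋆-algebra (the spectral order) only as a `def`.
attribute [local instance] CStarAlgebra.spectralOrder CStarAlgebra.spectralOrderedRing

lemma IsCIdeal.sub_mem {B : Type} [NonUnitalCStarAlgebra B] {I : Set B} (hI : IsCIdeal I)
    {x y : B} (hx : x ∈ I) (hy : y ∈ I) : x - y ∈ I := by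
  simpa [sub_eq_add_neg] using hI.add_mem _ _ hx (hI.smul_mem (-1) y hy)

lemma closure_span_subset {E : Type*} [AddCommGroup E] [Module ℂ E] [TopologicalSpace E]
    {S : Set E} {P : Submodule ℂ E} (hP : IsClosed (P : Set E)) (hS : S ⊆ P) :
    closure (Submodule.span ℂ S : Set E) ⊆ P :=
  closure_minimal (Submodule.span_le.2 hS) hP

namespace CStarAlgebra

variable {B : Type} [NonUnitalCStarAlgebra B]

/-- The witness is `d = b (b + ε)⁻¹`; the identity `d = ε⁻¹ • (b - b * d)` puts `d` in every ideal
containing `b`. -/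
lemma exists_approxUnit_of_nonneg {b : B} (hb : 0 ≤ b) {ε : ℝ} (hε : 0 < ε) :
    ∃ d : B, IsSelfAdjoint d ∧ d = ε⁻¹ • (b - b * d) ∧ ‖b - b * d - d * b + d * b * d‖ ≤ ε := by
  set g := fun t : ℝ => t / (t + ε)
  have hσ : ∀ t ∈ quasispectrum ℝ b, 0 ≤ t := quasispectrum_nonneg_of_nonneg b hb
  have hg : ContinuousOn g (quasispectrum ℝ b) :=
    continuousOn_id.div (by fun_prop) fun t ht => by have := hσ t ht; positivity
  refine ⟨cfcₙ g b, cfcₙ_predicate g b, ?_, ?_⟩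
  · calc cfcₙ g b = cfcₙ (fun t => ε⁻¹ • (t - t * g t)) b := cfcₙ_congr fun t ht => by
          have := hσ t ht
          simp only [g, smul_eq_mul]
          field_simp
          ring
      _ = _ := by
        rw [cfcₙ_smul ε⁻¹ (fun t => t - t * g t) b, cfcₙ_sub (fun t => t) (fun t => t * g t) b,
          cfcₙ_mul (fun t => t) g b, cfcₙ_id' ℝ b]
  · calc _ = ‖cfcₙ (fun t => t - t * g t - g t * t + g t * t * g t) b‖ := by
          rw [cfcₙ_add (fun t => t - t * g t - g t * t) (fun t => g t * t * g t) b,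
            cfcₙ_sub (fun t => t - t * g t) (fun t => g t * t) b,
            cfcₙ_sub (fun t => t) (fun t => t * g t) b, cfcₙ_mul (fun t => g t * t) g b,
            cfcₙ_mul g (fun t => t) b, cfcₙ_mul (fun t => t) g b, cfcₙ_id' ℝ b]
      _ ≤ ε := norm_cfcₙ_le fun t ht => by
          have ht0 := hσ t ht
          have hval : t - t * g t - g t * t + g t * t * g t = t * ε ^ 2 / (t + ε) ^ 2 := by
            simp only [g]
            field_simp
            ring
          rw [hval, Real.norm_of_nonneg (by positivity), div_le_iff₀ (by positivity)]
          nlinarith [sq_nonneg t, mul_nonneg ht0 hε.le]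

end CStarAlgebra

namespace Corr

variable {A B : Type} [NonUnitalCStarAlgebra A] [NonUnitalCStarAlgebra B] (Z : Corr A B)

lemma ip_zero_right (x : Z.X) : Z.ip x 0 = 0 := by
  simpa using Z.ip_smul 0 x 0

lemma ip_zero_left (x : Z.X) : Z.ip 0 x = 0 := by
  rw [← Z.ip_star, ip_zero_right, star_zero]

lemma ip_add_left (x y z : Z.X) : Z.ip (x + y) z = Z.ip x z + Z.ip y z := by
  rw [← Z.ip_star, Z.ip_add, star_add, Z.ip_star, Z.ip_star]

lemma ip_smul_left (c : ℂ) (x y : Z.X) : Z.ip (c • x) y = star c • Z.ip x y := by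
  rw [← Z.ip_star, Z.ip_smul, star_smul, Z.ip_star]

lemma ip_sub_right (x y z : Z.X) : Z.ip x (y - z) = Z.ip x y - Z.ip x z := by
  rw [sub_eq_add_neg, Z.ip_add, ← neg_one_smul ℂ z, Z.ip_smul, neg_one_smul, ← sub_eq_add_neg]

lemma ip_sub_left (x y z : Z.X) : Z.ip (x - y) z = Z.ip x z - Z.ip y z := by
  rw [← Z.ip_star, ip_sub_right, star_sub, Z.ip_star, Z.ip_star]

lemma ip_φ (a : A) (x y : Z.X) : Z.ip x (Z.φ a y) = Z.ip (Z.φ (star a) x) y := by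
  rw [Z.φ_adj, star_star]

lemma φ_zero_left (x : Z.X) : Z.φ 0 x = 0 := by
  simpa using Z.φ_smul' 0 0 x

lemma ip_self_nonneg (x : Z.X) : 0 ≤ Z.ip x x := by
  obtain ⟨b, hb⟩ := Z.ip_pos x
  exact hb ▸ star_mul_self_nonneg b

/-- Mathlib's Hilbert C⋆-modules over `Bᵐᵒᵖ` are right Hilbert `B`-modules; this gives us
Cauchy–Schwarz and continuity of the inner product. -/
instance : SMul Bᵐᵒᵖ Z.X := ⟨fun b x => Z.sm x b.unop⟩

instance : CStarModule Bᵐᵒᵖ Z.X where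
  inner x y := op (Z.ip x y)
  inner_add_right := by simp [Z.ip_add]
  inner_self_nonneg {x} := by
    obtain ⟨b, hb⟩ := Z.ip_pos x
    rw [hb, op_mul, op_star]
    exact mul_star_self_nonneg (op b)
  inner_self {x} := by
    rw [op_eq_zero_iff, ← norm_eq_zero, ← Z.ip_norm, sq_eq_zero_iff, norm_eq_zero]
  inner_op_smul_right {b x y} := by
    change op (Z.ip x (Z.sm y b.unop)) = b * op (Z.ip x y)
    rw [Z.ip_sm, op_mul, op_unop]
  inner_smul_right_complex {c x y} := by
    change op (Z.ip x (c • y)) = c • op (Z.ip x y)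
    rw [Z.ip_smul, op_smul]
  star_inner x y := by
    change star (op (Z.ip x y)) = op (Z.ip y x)
    rw [← op_star, Z.ip_star]
  norm_eq_sqrt_norm_inner_self x := by
    rw [norm_op, ← Z.ip_norm, Real.sqrt_sq (norm_nonneg x)]

lemma continuous_ip_right (u : Z.X) : Continuous (Z.ip u) :=
  continuous_unop.comp <| (CStarModule.innerSL (A := Bᵐᵒᵖ) u).continuous

lemma continuous_ip_left (u : Z.X) : Continuous fun w => Z.ip w u :=
  continuous_unop.comp <| (CStarModule.innerSL (A := Bᵐᵒᵖ) (E := Z.X)).flip u |>.continuous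

def vectorMap (y : Z.X) : A →ₚ[ℂ] B :=
  PositiveLinearMap.mk₀
    { toFun := fun a => Z.ip y (Z.φ a y)
      map_add' := fun a b => by simp only [Z.φ_add', Z.ip_add]
      map_smul' := fun c a => by simp only [Z.φ_smul', Z.ip_smul, RingHom.id_apply] }
    fun a ha => by
      obtain ⟨s, rfl⟩ := CStarAlgebra.nonneg_iff_eq_star_mul_self.mp ha
      change 0 ≤ Z.ip y (Z.φ (star s * s) y)
      rw [Z.φ_mul, ← Z.φ_adj]
      exact Z.ip_self_nonneg _

lemma ip_φ_self (a : A) (y : Z.X) :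
    Z.ip (Z.φ a y) (Z.φ a y) = Z.vectorMap y (star a * a) := by
  change _ = Z.ip y (Z.φ (star a * a) y)
  rw [Z.φ_mul, ← Z.φ_adj]

lemma exists_norm_φ_le (y : Z.X) : ∃ C : ℝ, ∀ a, ‖Z.φ a y‖ ≤ C * ‖a‖ := by
  obtain ⟨C, hC⟩ := (Z.vectorMap y).exists_norm_apply_le
  refine ⟨√C, fun a => (pow_le_pow_iff_left₀ (norm_nonneg _) (by positivity) two_ne_zero).mp ?_⟩
  calc ‖Z.φ a y‖ ^ 2 = ‖Z.vectorMap y (star a * a)‖ := by rw [Z.ip_norm, ip_φ_self]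
    _ ≤ C * ‖star a * a‖ := hC _
    _ = (√C * ‖a‖) ^ 2 := by
      rw [CStarRing.norm_star_mul_self, mul_pow, Real.sq_sqrt C.coe_nonneg, sq]

lemma continuous_φ_left (y : Z.X) : Continuous fun a => Z.φ a y := by
  obtain ⟨C, hC⟩ := Z.exists_norm_φ_le y
  exact AddMonoidHomClass.continuous_of_bound
    (AddMonoidHom.mk' (fun a => Z.φ a y) fun a b => Z.φ_add' a b y) C hC

variable {I : Set B}

def ipRightPreimage (hI : IsCIdeal I) (u : Z.X) : Submodule ℂ Z.X where
  carrier := Z.ip u ⁻¹' I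
  zero_mem' := by simpa only [Set.mem_preimage, ip_zero_right] using hI.zero_mem
  add_mem' {w w'} hw hw' := by
    simpa only [Set.mem_preimage, Z.ip_add] using hI.add_mem _ _ hw hw'
  smul_mem' c w hw := by
    simpa only [Set.mem_preimage, Z.ip_smul] using hI.smul_mem c _ hw

def ipLeftPreimage (hI : IsCIdeal I) (u : Z.X) : Submodule ℂ Z.X where
  carrier := (Z.ip · u) ⁻¹' I
  zero_mem' := by simpa only [Set.mem_preimage, ip_zero_left] using hI.zero_mem
  add_mem' {w w'} hw hw' := by
    simpa only [Set.mem_preimage, ip_add_left] using hI.add_mem _ _ hw hw'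
  smul_mem' c w hw := by
    simpa only [Set.mem_preimage, ip_smul_left] using hI.smul_mem (star c) _ hw

lemma isClosed_ipRightPreimage (hI : IsCIdeal I) (u : Z.X) :
    IsClosed (Z.ipRightPreimage hI u : Set Z.X) :=
  hI.isClosed.preimage (Z.continuous_ip_right u)

lemma isClosed_ipLeftPreimage (hI : IsCIdeal I) (u : Z.X) :
    IsClosed (Z.ipLeftPreimage hI u : Set Z.X) :=
  hI.isClosed.preimage (Z.continuous_ip_left u)

lemma ip_mem_of_mem_setR (hI : IsCIdeal I) {z : Z.X} (hz : z ∈ Z.setR I) (u : Z.X) :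
    Z.ip u z ∈ I := by
  refine closure_span_subset (Z.isClosed_ipRightPreimage hI u) ?_ hz
  rintro _ ⟨ξ, b, hb, rfl⟩
  change Z.ip u (Z.sm ξ b) ∈ I
  rw [Z.ip_sm]
  exact hI.mul_left_mem _ _ hb

lemma mem_setR_of_ip_self_mem (hI : IsCIdeal I) {z : Z.X} (hz : Z.ip z z ∈ I) :
    z ∈ Z.setR I := by
  refine Metric.mem_closure_iff.2 fun δ hδ => ?_
  obtain ⟨d, hd_sa, hd_eq, hd_le⟩ :=
    CStarAlgebra.exists_approxUnit_of_nonneg (Z.ip_self_nonneg z) (by positivity : 0 < δ ^ 2 / 2)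
  have hdI : d ∈ I := by
    rw [hd_eq]
    exact hI.smul_mem _ _ (hI.sub_mem hz (hI.mul_right_mem _ _ hz))
  refine ⟨Z.sm z d, Submodule.subset_span ⟨z, d, hdI, rfl⟩, ?_⟩
  have hw : Z.ip (z - Z.sm z d) (z - Z.sm z d)
      = Z.ip z z - Z.ip z z * d - d * Z.ip z z + d * Z.ip z z * d := by
    have hsm : Z.ip (Z.sm z d) z = d * Z.ip z z := by
      rw [← Z.ip_star, Z.ip_sm, star_mul, hd_sa.star_eq, Z.ip_star]
    rw [ip_sub_left, ip_sub_right, ip_sub_right, Z.ip_sm, Z.ip_sm, hsm]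
    abel
  have hsq : ‖z - Z.sm z d‖ ^ 2 < δ ^ 2 := by
    rw [Z.ip_norm, hw]
    linarith [sq_pos_of_pos hδ]
  rw [dist_eq_norm]
  exact lt_of_pow_lt_pow_left₀ 2 hδ.le hsq

lemma mem_inv_iff (hI : IsCIdeal I) {a : A} : a ∈ Z.inv I ↔ ∀ z u, Z.ip u (Z.φ a z) ∈ I :=
  ⟨fun ha z u => Z.ip_mem_of_mem_setR hI (ha z) u,
    fun h z => Z.mem_setR_of_ip_self_mem hI (h z (Z.φ a z))⟩

lemma isCIdeal_inv (hI : IsCIdeal I) : IsCIdeal (Z.inv I) where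
  isClosed := by
    have h : Z.inv I = ⋂ z, ⋂ u, (fun a => Z.ip u (Z.φ a z)) ⁻¹' I := by
      ext a
      simp only [Z.mem_inv_iff hI, Set.mem_iInter, Set.mem_preimage]
    rw [h]
    exact isClosed_iInter fun z => isClosed_iInter fun u =>
      hI.isClosed.preimage ((Z.continuous_ip_right u).comp (Z.continuous_φ_left z))
  zero_mem := (Z.mem_inv_iff hI).2 fun z u => by
    simpa only [φ_zero_left, ip_zero_right] using hI.zero_mem
  add_mem x y hx hy := (Z.mem_inv_iff hI).2 fun z u => by
    simpa only [Z.φ_add', Z.ip_add] using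
      hI.add_mem _ _ ((Z.mem_inv_iff hI).1 hx z u) ((Z.mem_inv_iff hI).1 hy z u)
  smul_mem c x hx := (Z.mem_inv_iff hI).2 fun z u => by
    simpa only [Z.φ_smul', Z.ip_smul] using hI.smul_mem c _ ((Z.mem_inv_iff hI).1 hx z u)
  mul_left_mem b x hx := (Z.mem_inv_iff hI).2 fun z u => by
    simpa only [Z.φ_mul, ip_φ] using (Z.mem_inv_iff hI).1 hx z (Z.φ (star b) u)
  mul_right_mem b x hx := (Z.mem_inv_iff hI).2 fun z u => by
    simpa only [Z.φ_mul] using (Z.mem_inv_iff hI).1 hx (Z.φ b z) u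

end Corr

lemma IsTensor.mem_of_isClosed {A B C : Type} [NonUnitalCStarAlgebra A]
    [NonUnitalCStarAlgebra B] [NonUnitalCStarAlgebra C] {Z₁ : Corr A B} {Z₂ : Corr B C}
    {T : Corr A C} {t : Z₁.X → Z₂.X → T.X} (ht : IsTensor Z₁ Z₂ T t) {P : Submodule ℂ T.X}
    (hP : IsClosed (P : Set T.X)) (h : ∀ x y, t x y ∈ P) (ζ : T.X) : ζ ∈ P :=
  closure_span_subset hP (by rintro _ ⟨x, y, rfl⟩; exact h x y) (ht.dense ▸ Set.mem_univ ζ)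

/-- `(Z₁ ⊗_B Z₂)⁻¹(I) = Z₁⁻¹(Z₂⁻¹(I))` for a closed ideal `I ⊴ C`. -/
theorem stmt6 {A B C : Type} [NonUnitalCStarAlgebra A] [NonUnitalCStarAlgebra B]
    [NonUnitalCStarAlgebra C] (Z₁ : Corr A B) (Z₂ : Corr B C) (T : Corr A C)
    (t : Z₁.X → Z₂.X → T.X) (ht : IsTensor Z₁ Z₂ T t)
    (I : Set C) (hI : IsCIdeal I) :
    T.inv I = Z₁.inv (Z₂.inv I) := by
  have hJ := Z₂.isCIdeal_inv hI
  ext a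
  constructor
  · intro ha x
    refine Z₁.mem_setR_of_ip_self_mem hJ ((Z₂.mem_inv_iff hI).2 fun y y' => ?_)
    rw [← ht.inner, ← ht.act_left, ← ht.act_left]
    exact (T.mem_inv_iff hI).1 ha _ _
  · intro ha
    have hgen : ∀ x y η, T.ip η (T.φ a (t x y)) ∈ I := fun x y =>
      ht.mem_of_isClosed (T.isClosed_ipLeftPreimage hI _) fun x' y' => by
        change T.ip (t x' y') (T.φ a (t x y)) ∈ I
        rw [ht.act_left, ht.inner]
        exact (Z₂.mem_inv_iff hI).1 ((Z₁.mem_inv_iff hJ).1 ha x x') y y'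
    refine (T.mem_inv_iff hI).2 fun ζ η => ?_
    rw [T.ip_φ]
    refine ht.mem_of_isClosed (T.isClosed_ipRightPreimage hI _) (fun x y => ?_) ζ
    change T.ip _ (t x y) ∈ I
    rw [← T.ip_φ]
    exact hgen x y η
end
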